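/- arXiv:1106.0447 — 2 statements merged into one kernel-verified Lean document; each statement's English description precedes it below -/
import Mathlib

section
/- Let L be a list of distinct keys and consider the recursion tree of Quicksort (using the first element as pivot). A key k lies in the subtree rooted at pivot p if and only if for every key k' preceding p in L: if k' < p then k > k', and if k' > p then k < k'. -/
/-! The call with pivot `p` receives exactly those keys that no earlier pivot separates from `p`.
A call on `h :: t` passes `p` on to the recursive call for the side of `h` containing `p`; that
call receives the keys of `t` on the same side of `h` as `p`, and the keys before `p` that it drops
lie on the other side of `h`, so they cannot separate `p` from the keys it keeps. -/

/-- The list of inputs to all recursive calls (nodes of the recursion tree)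
of head-pivot Quicksort on `L`. -/
def calls : List ℤ → List (List ℤ)
  | [] => []
  | h :: t =>
      (h :: t) :: (calls (t.filter (· < h)) ++ calls (t.filter (h < ·)))
termination_by L => L.length
decreasing_by
  all_goals simp [Nat.lt_succ_iff, List.length_filter_le]
  all_goals exact (List.length_filter_le ..).trans (by simp)

def OnSameSide {α : Type*} [LT α] (a p k : α) : Prop :=
  (a < p → a < k) ∧ (p < a → k < a)

instance {α : Type*} [LT α] [DecidableLT α] (a p k : α) : Decidable (OnSameSide a p k) :=
  inferInstanceAs (Decidable (_ ∧ _))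

def Unseparated {α : Type*} [LT α] (L : List α) (p k : α) : Prop :=
  ∀ a, [a, p].Sublist L → OnSameSide a p k

def InSubtree (L : List ℤ) (p k : ℤ) : Prop :=
  ∃ M ∈ calls L, M.head? = some p ∧ k ∈ M

section OnSameSide

variable {α : Type*} [LinearOrder α] {a b p k : α}

theorem onSameSide_self (a p : α) : OnSameSide a p p :=
  ⟨id, id⟩

theorem not_onSameSide_self (hpa : p ≠ a) : ¬ OnSameSide a p a := by
  unfold OnSameSide
  rcases hpa.lt_or_gt with h | h <;> simp [h]

theorem onSameSide_iff_of_lt (hpa : p < a) : OnSameSide a p k ↔ k < a := by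
  simp [OnSameSide, hpa, hpa.not_gt]

theorem onSameSide_iff_of_gt (hap : a < p) : OnSameSide a p k ↔ a < k := by
  simp [OnSameSide, hap, hap.not_gt]

theorem OnSameSide.of_not_onSameSide (hk : OnSameSide a p k) (hb : ¬ OnSameSide a p b)
    (hba : b ≠ a) : OnSameSide b p k := by
  rcases lt_trichotomy a p with h | rfl | h
  · rw [onSameSide_iff_of_gt h] at hk hb
    constructor <;> intro <;> order
  · simp [OnSameSide] at hb
  · rw [onSameSide_iff_of_lt h] at hk hb
    constructor <;> intro <;> order

end OnSameSide

section Unseparated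

variable {α : Type*} [LinearOrder α] {h p k : α} {t : List α}

theorem unseparated_cons_self (hh : h ∉ t) (k : α) : Unseparated (h :: t) h k := by
  intro a hs
  refine absurd ?_ hh
  rcases List.sublist_cons_iff.1 hs with hs | ⟨r, hr, hs⟩
  · exact hs.subset (by simp)
  · obtain rfl : [h] = r := (List.cons.inj hr).2
    exact hs.subset (by simp)

theorem mem_filter_onSameSide_iff (hph : p ≠ h) :
    k ∈ t.filter (OnSameSide h p ·) ↔ k ∈ h :: t ∧ OnSameSide h p k := by
  simp only [List.mem_filter, decide_eq_true_eq, List.mem_cons]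
  constructor
  · rintro ⟨hk, hs⟩
    exact ⟨Or.inr hk, hs⟩
  · rintro ⟨rfl | hk, hs⟩
    · exact absurd hs (not_onSameSide_self hph)
    · exact ⟨hk, hs⟩

theorem unseparated_cons_iff (hh : h ∉ t) (hp : p ∈ t) :
    Unseparated (h :: t) p k ↔
      OnSameSide h p k ∧ Unseparated (t.filter (OnSameSide h p ·)) p k := by
  constructor
  · intro hu
    exact ⟨hu h ((List.singleton_sublist.2 hp).cons_cons h),
      fun a hs => hu a ((hs.trans List.filter_sublist).cons h)⟩
  · rintro ⟨hhk, hu⟩ a hs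
    rcases List.sublist_cons_iff.1 hs with hs | ⟨r, hr, -⟩
    · by_cases ha : OnSameSide h p a
      · exact hu a (by simpa [ha, onSameSide_self] using hs.filter (OnSameSide h p ·))
      · exact hhk.of_not_onSameSide ha (ne_of_mem_of_not_mem (hs.subset (by simp)) hh)
    · obtain rfl : a = h := (List.cons.inj hr).1
      exact hhk

end Unseparated

section InSubtree

theorem subset_of_mem_calls : ∀ {L M : List ℤ}, M ∈ calls L → M ⊆ L
  | [], M, hM => by simp [calls] at hM
  | h :: t, M, hM => by
    rw [calls, List.mem_cons, List.mem_append] at hM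
    rcases hM with rfl | hM | hM
    · exact List.Subset.refl _
    all_goals exact fun x hx =>
      List.mem_cons_of_mem h (List.mem_of_mem_filter (subset_of_mem_calls hM hx))
termination_by L => L.length
decreasing_by all_goals simpa using List.length_filter_le _ t

variable {L t : List ℤ} {h p k : ℤ}

theorem InSubtree.pivot_mem (hs : InSubtree L p k) : p ∈ L := by
  obtain ⟨M, hM, hMp, -⟩ := hs
  exact subset_of_mem_calls hM (List.mem_of_head? hMp)

theorem inSubtree_cons_self : InSubtree (h :: t) h k ↔ k ∈ h :: t := by
  constructor
  · rintro ⟨M, hM, -, hk⟩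
    exact subset_of_mem_calls hM hk
  · intro hk
    exact ⟨h :: t, by rw [calls]; exact List.mem_cons_self, rfl, hk⟩

theorem inSubtree_cons_iff (hph : p ≠ h) :
    InSubtree (h :: t) p k ↔
      InSubtree (t.filter (· < h)) p k ∨ InSubtree (t.filter (h < ·)) p k := by
  simp [InSubtree, calls, or_and_right, exists_or, Ne.symm hph]

theorem inSubtree_cons_iff_filter_onSameSide (hph : p ≠ h) :
    InSubtree (h :: t) p k ↔ InSubtree (t.filter (OnSameSide h p ·)) p k := by
  rw [inSubtree_cons_iff hph]
  rcases hph.lt_or_gt with hlt | hgt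
  · have hS : t.filter (OnSameSide h p ·) = t.filter (· < h) :=
      List.filter_congr fun x _ => by simp [onSameSide_iff_of_lt hlt]
    rw [hS, or_iff_left fun hs => by simpa [hlt.not_gt] using (List.mem_filter.1 hs.pivot_mem).2]
  · have hS : t.filter (OnSameSide h p ·) = t.filter (h < ·) :=
      List.filter_congr fun x _ => by simp [onSameSide_iff_of_gt hgt]
    rw [hS, or_iff_right fun hs => by simpa [hgt.not_gt] using (List.mem_filter.1 hs.pivot_mem).2]

theorem inSubtree_iff_mem_and_unseparated :
    ∀ {L : List ℤ} {p k : ℤ}, L.Nodup → p ∈ L → (InSubtree L p k ↔ k ∈ L ∧ Unseparated L p k)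
  | [], _, _, _, hp => absurd hp List.not_mem_nil
  | h :: t, p, k, hL, hp => by
    obtain ⟨hh, ht⟩ := List.nodup_cons.1 hL
    by_cases hph : p = h
    · subst hph
      simp [inSubtree_cons_self, unseparated_cons_self hh]
    · have hpt : p ∈ t := (List.mem_cons.1 hp).resolve_left hph
      have hpS : p ∈ t.filter (OnSameSide h p ·) :=
        List.mem_filter.2 ⟨hpt, by simpa using onSameSide_self h p⟩
      rw [inSubtree_cons_iff_filter_onSameSide hph,
        inSubtree_iff_mem_and_unseparated (ht.filter _) hpS, mem_filter_onSameSide_iff hph,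
        unseparated_cons_iff hh hpt, and_assoc]
termination_by L => L.length
decreasing_by simpa using List.length_filter_le _ t

end InSubtree

/-- A key `k` lies in the subtree of the recursion tree of Quicksort on `L`
rooted at the node with pivot `p` iff for every key `k'` preceding `p` in `L`:
if `k' < p` then `k > k'`, and if `k' > p` then `k < k'`. -/
theorem stmt0 (L : List ℤ) (hnd : L.Nodup) (p k : ℤ)
    (hp : p ∈ L) (hk : k ∈ L) :
    (∃ M ∈ calls L, M.head? = some p ∧ k ∈ M) ↔
      (∀ k' : ℤ, [k', p].Sublist L →
        ((k' < p → k' < k) ∧ (p < k' → k < k'))) :=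
  (inSubtree_iff_mem_and_unseparated hnd hp).trans (and_iff_right hk)
end

section
/- Memoization soundness for a single memo table: suppose a memo table θ is an 'invariant' table in the sense that whenever θ(β) = v, there exists a pure term t such that the branch β determines the return statement 'return t' in the function body and t evaluates to v under the pure (non-memoizing) semantics. Then evaluating a return statement under the memoizing semantics (looking up β in θ, and on a miss evaluating and storing) yields the same value as the pure semantics, and the updated table is again invariant. -/
namespace Memo

variable {Branch Term Value : Type}

def Invariant (eval : Term → Value) (att : Branch → Option Term)
    (θ : Branch → Option Value) : Prop :=
  ∀ β v, θ β = some v → ∃ t, att β = some t ∧ eval t = v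

variable {eval : Term → Value} {att : Branch → Option Term} {θ : Branch → Option Value}

theorem Invariant.eq_eval {β : Branch} {t : Term} {v : Value} (hinv : Invariant eval att θ)
    (hβ : att β = some t) (hθ : θ β = some v) : v = eval t := by
  obtain ⟨t', ht', rfl⟩ := hinv β v hθ
  rw [hβ, Option.some.injEq] at ht'
  rw [ht']

theorem Invariant.getD_eq_eval {β : Branch} {t : Term} (hinv : Invariant eval att θ)
    (hβ : att β = some t) : (θ β).getD (eval t) = eval t := by
  cases hθ : θ β with
  | none => rfl
  | some v => exact hinv.eq_eval hβ hθ

theorem Invariant.update [DecidableEq Branch] {β : Branch} {t : Term}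
    (hinv : Invariant eval att θ) (hβ : att β = some t) :
    Invariant eval att (Function.update θ β (some (eval t))) := by
  intro β' v h
  rcases eq_or_ne β' β with rfl | hne
  · rw [Function.update_self, Option.some.injEq] at h
    exact ⟨t, hβ, h⟩
  · rw [Function.update_of_ne hne] at h
    exact hinv β' v h

end Memo

/-- Memoization soundness for a single memo table. A memo table `θ` (partial
map from branches to values) is invariant when every stored binding `θ β = v`
comes from a return statement `return t` determined by `β` in the function
body (via the access function `att`) whose body `t` purely evaluates to `v`.
Then the memoized evaluation of `return t` at branch `β` (lookup, and on a
miss evaluate-and-store) returns `eval t`, and the updated table is again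
invariant. -/
theorem stmt11 {Term Value Event : Type} [DecidableEq Event]
    (eval : Term → Value)
    (att : List Event → Option Term)       -- access function for the fixed function body
    (θ : List Event → Option Value)
    (hinv : ∀ β v, θ β = some v → ∃ t, att β = some t ∧ eval t = v)
    (β : List Event) (t : Term) (hβ : att β = some t) :
    (match θ β with
      | some v => v
      | none => eval t) = eval t ∧
    (∀ β' v,
        (fun b => if b = β then
            some (match θ β with
                  | some v => v
                  | none => eval t)
          else θ b) β' = some v →
        ∃ t', att β' = some t' ∧ eval t' = v) := by
  have hinv : Memo.Invariant eval att θ := hinv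
  -- the `match` on `θ β` in the statement is `Option.getD` unfolded
  have hlookup : (θ β).getD (eval t) = eval t := hinv.getD_eq_eval hβ
  refine ⟨hlookup, fun β' v h => hinv.update hβ β' v ?_⟩
  rwa [Function.update_apply, ← hlookup]
end
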